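/- If X and Y are conditionally independent given θ, and T_x(X) is locally sufficient for θ given X (θ–T_x(X)–X Markov chain) and T_y(Y) is locally sufficient for θ given Y (θ–T_y(Y)–Y Markov chain), then (T_x(X), T_y(Y)) is globally sufficient for θ, i.e., θ–(T_x(X),T_y(Y))–(X,Y) is a Markov chain. -/

import Mathlib

/-!
Local sufficiency of `Tx(X)` is equivalent to a Fisher–Neyman factorization
`P(θ = a, X = x) = P(θ = a, Tx(X) = Tx x) · r(x)`, and likewise for `Y` with a factor `s(y)`.
Conditional independence of `X` and `Y` given `θ` passes to `Tx(X)` and `Ty(Y)`, so on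
`P(θ = a) > 0` both `P(θ = a, X = x, Y = y)` and `P(θ = a, Tx(X) = Tx x, Ty(Y) = Ty y)` split
as products over `θ = a`; comparing them gives the factorization of `(X, Y)` through
`(Tx(X), Ty(Y))` with factor `r(x) s(y)`, which in turn is global sufficiency.
-/

open scoped Classical BigOperators

/-- Probability of a set of outcomes under a pmf `p` on a finite sample space. -/
noncomputable def pr {Ω : Type*} [Fintype Ω] (p : Ω → ℝ) (s : Set Ω) : ℝ :=
  ∑ ω, if ω ∈ s then p ω else 0

/-- `p` is a probability mass function on the finite sample space `Ω`. -/
def IsPMF {Ω : Type*} [Fintype Ω] (p : Ω → ℝ) : Prop :=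
  (∀ ω, 0 ≤ p ω) ∧ (∑ ω, p ω) = 1

/-- The Markov chain `A – B – C`: `A` and `C` are conditionally independent given `B`. -/
def MarkovChain {Ω α β γ : Type*} [Fintype Ω] (p : Ω → ℝ)
    (A : Ω → α) (B : Ω → β) (C : Ω → γ) : Prop :=
  ∀ (a : α) (b : β) (c : γ),
    pr p {ω | A ω = a ∧ B ω = b ∧ C ω = c} * pr p {ω | B ω = b} =
      pr p {ω | A ω = a ∧ B ω = b} * pr p {ω | B ω = b ∧ C ω = c}

open Finset

section Pr

variable {Ω α β : Type*} [Fintype Ω] {p : Ω → ℝ}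

theorem pr_congr {P Q : Ω → Prop} (h : ∀ ω, P ω ↔ Q ω) :
    pr p {ω | P ω} = pr p {ω | Q ω} := by
  simp only [h]

theorem pr_eq_zero_of_forall_not {P : Ω → Prop} (h : ∀ ω, ¬ P ω) : pr p {ω | P ω} = 0 := by
  simp [pr, h]

theorem pr_eq_zero_of_subset (hp : ∀ ω, 0 ≤ p ω) {s t : Set Ω} (hst : s ⊆ t)
    (ht : pr p t = 0) : pr p s = 0 := by
  have hle : pr p s ≤ pr p t := sum_le_sum fun ω _ => by
    by_cases hs : ω ∈ s
    · simp [hs, hst hs]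
    · split_ifs <;> simp [hp ω]
  exact le_antisymm (ht ▸ hle) (sum_nonneg fun ω _ => by split_ifs <;> simp [hp ω])

theorem pr_eq_sum_pr_and (F : Ω → α) (P : Ω → Prop) :
    pr p {ω | P ω} = ∑ a ∈ univ.image F, pr p {ω | F ω = a ∧ P ω} := by
  unfold pr
  rw [sum_comm]
  refine sum_congr rfl fun ω _ => ?_
  by_cases hP : P ω <;> simp [hP]

theorem pr_and_comp_eq_sum (F : Ω → α) (g : α → β) (P : Ω → Prop) (b : β) :
    pr p {ω | P ω ∧ g (F ω) = b} =
      ∑ a ∈ univ.image F with g a = b, pr p {ω | P ω ∧ F ω = a} := by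
  unfold pr
  rw [sum_comm]
  refine sum_congr rfl fun ω _ => ?_
  by_cases hP : P ω <;> simp [hP]

end Pr

namespace MarkovChain

variable {Ω α β γ δ : Type*} [Fintype Ω] {p : Ω → ℝ} {A : Ω → α} {B : Ω → β} {C : Ω → γ}

theorem symm (h : MarkovChain p A B C) : MarkovChain p C B A := fun c b a => by
  rw [pr_congr fun ω => (and_rotate.trans and_left_comm : C ω = c ∧ B ω = b ∧ A ω = a ↔ _),
    pr_congr fun ω => (and_comm : C ω = c ∧ B ω = b ↔ _),
    pr_congr fun ω => (and_comm : B ω = b ∧ A ω = a ↔ _),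
    mul_comm (pr p {ω | B ω = b ∧ C ω = c})]
  exact h a b c

theorem comp_right (h : MarkovChain p A B C) (g : γ → δ) :
    MarkovChain p A B (fun ω => g (C ω)) := fun a b d => by
  have hABC := pr_and_comp_eq_sum (p := p) C g (fun ω => A ω = a ∧ B ω = b) d
  simp only [and_assoc] at hABC
  beta_reduce
  rw [hABC, pr_and_comp_eq_sum C g (fun ω => B ω = b) d, sum_mul, mul_sum]
  exact sum_congr rfl fun c _ => h a b c

theorem comp_left (h : MarkovChain p A B C) (f : α → δ) :
    MarkovChain p (fun ω => f (A ω)) B C :=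
  (h.symm.comp_right f).symm

end MarkovChain

section Factorization

variable {Ω Θ β γ δ ε : Type*} [Fintype Ω] {p : Ω → ℝ} {θ : Ω → Θ}

/-- The Fisher–Neyman factorization of the joint law of `θ` and `Z` through the statistic
`f ∘ Z`, with `r` the factor that does not depend on `θ`. -/
def Factorization (p : Ω → ℝ) (θ : Ω → Θ) (f : γ → β) (Z : Ω → γ) (r : γ → ℝ) : Prop :=
  ∀ a z, pr p {ω | θ ω = a ∧ Z ω = z} = pr p {ω | θ ω = a ∧ f (Z ω) = f z} * r z

theorem markovChain_comp_iff {f : γ → β} {Z : Ω → γ} :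
    MarkovChain p θ (fun ω => f (Z ω)) Z ↔
      ∀ a z, pr p {ω | θ ω = a ∧ Z ω = z} * pr p {ω | f (Z ω) = f z} =
        pr p {ω | θ ω = a ∧ f (Z ω) = f z} * pr p {ω | Z ω = z} := by
  have h₃ : ∀ a z, pr p {ω | θ ω = a ∧ f (Z ω) = f z ∧ Z ω = z} =
      pr p {ω | θ ω = a ∧ Z ω = z} :=
    fun a z => pr_congr fun ω => and_congr_right' (and_iff_right_of_imp fun h => h ▸ rfl)
  have h₂ : ∀ z, pr p {ω | f (Z ω) = f z ∧ Z ω = z} = pr p {ω | Z ω = z} :=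
    fun z => pr_congr fun ω => and_iff_right_of_imp fun h => h ▸ rfl
  constructor
  · intro h a z
    simpa only [h₃, h₂] using h a (f z) z
  · intro h a b z
    by_cases hb : f z = b
    · subst hb
      simpa only [h₃, h₂] using h a z
    · have hne : ∀ ω, ¬ (f (Z ω) = b ∧ Z ω = z) := fun ω ⟨hfb, hz⟩ => hb (hz ▸ hfb)
      rw [pr_eq_zero_of_forall_not hne, pr_eq_zero_of_forall_not fun ω h => hne ω h.2,
        zero_mul, mul_zero]

theorem Factorization.markovChain {f : γ → β} {Z : Ω → γ} {r : γ → ℝ}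
    (h : Factorization p θ f Z r) : MarkovChain p θ (fun ω => f (Z ω)) Z := by
  refine markovChain_comp_iff.2 fun a z => ?_
  have hZ : pr p {ω | Z ω = z} = pr p {ω | f (Z ω) = f z} * r z := by
    rw [pr_eq_sum_pr_and θ, pr_eq_sum_pr_and θ, sum_mul]
    exact sum_congr rfl fun a _ => h a z
  rw [h a z, hZ]
  ring

theorem MarkovChain.exists_factorization (hp : ∀ ω, 0 ≤ p ω) {f : γ → β} {Z : Ω → γ}
    (h : MarkovChain p θ (fun ω => f (Z ω)) Z) : ∃ r, Factorization p θ f Z r := by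
  refine ⟨fun z => pr p {ω | Z ω = z} / pr p {ω | f (Z ω) = f z}, fun a z => ?_⟩
  dsimp only
  by_cases h0 : pr p {ω | f (Z ω) = f z} = 0
  · rw [h0, div_zero, mul_zero]
    exact pr_eq_zero_of_subset hp (fun ω hω => congrArg f hω.2) h0
  · rw [mul_div_assoc', eq_div_iff h0]
    exact markovChain_comp_iff.1 h a z

theorem Factorization.prodMap (hp : ∀ ω, 0 ≤ p ω) {X : Ω → γ} {Y : Ω → δ} {f : γ → β}
    {g : δ → ε} {r : γ → ℝ} {s : δ → ℝ} (hci : MarkovChain p X θ Y)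
    (hX : Factorization p θ f X r) (hY : Factorization p θ g Y s) :
    Factorization p θ (Prod.map f g) (fun ω => (X ω, Y ω)) (fun z => r z.1 * s z.2) := by
  rintro a ⟨x, y⟩
  simp only [Prod.map, Prod.mk.injEq]
  by_cases ha : pr p {ω | θ ω = a} = 0
  · rw [pr_eq_zero_of_subset hp (fun ω hω => hω.1) ha,
      pr_eq_zero_of_subset hp (fun ω hω => hω.1) ha, zero_mul]
  refine mul_right_cancel₀ ha ?_
  have hXY : pr p {ω | θ ω = a ∧ X ω = x ∧ Y ω = y} * pr p {ω | θ ω = a} =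
      pr p {ω | θ ω = a ∧ X ω = x} * pr p {ω | θ ω = a ∧ Y ω = y} := by
    rw [pr_congr fun ω => and_left_comm, pr_congr fun ω => and_comm (a := θ ω = a)]
    exact hci x a y
  have hfg : pr p {ω | θ ω = a ∧ f (X ω) = f x ∧ g (Y ω) = g y} * pr p {ω | θ ω = a} =
      pr p {ω | θ ω = a ∧ f (X ω) = f x} * pr p {ω | θ ω = a ∧ g (Y ω) = g y} := by
    rw [pr_congr fun ω => and_left_comm, pr_congr fun ω => and_comm (a := θ ω = a)]
    exact (hci.comp_left f).comp_right g (f x) a (g y)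
  calc pr p {ω | θ ω = a ∧ X ω = x ∧ Y ω = y} * pr p {ω | θ ω = a}
      = pr p {ω | θ ω = a ∧ f (X ω) = f x} * r x *
          (pr p {ω | θ ω = a ∧ g (Y ω) = g y} * s y) := by
        rw [hXY, hX, hY]
    _ = pr p {ω | θ ω = a ∧ f (X ω) = f x ∧ g (Y ω) = g y} * (r x * s y) *
          pr p {ω | θ ω = a} := by
        rw [mul_right_comm _ (r x * s y), hfg]
        ring

end Factorization

/-- Under conditional independence of `X` and `Y` given `θ`, local sufficiency of `T_x(X)` and
`T_y(Y)` for `θ` implies global sufficiency of the pair `(T_x(X), T_y(Y))` for `θ`. -/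
theorem local_sufficiency_implies_global_condindep
    {Ω Θ 𝒳 𝒴 T₁ T₂ : Type*} [Fintype Ω]
    (p : Ω → ℝ) (hp : IsPMF p)
    (θ : Ω → Θ) (X : Ω → 𝒳) (Y : Ω → 𝒴) (Tx : 𝒳 → T₁) (Ty : 𝒴 → T₂)
    (hci : MarkovChain p X θ Y)
    (hlx : MarkovChain p θ (fun ω => Tx (X ω)) X)
    (hly : MarkovChain p θ (fun ω => Ty (Y ω)) Y) :
    MarkovChain p θ (fun ω => (Tx (X ω), Ty (Y ω))) (fun ω => (X ω, Y ω)) := by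
  obtain ⟨r, hr⟩ := hlx.exists_factorization hp.1
  obtain ⟨s, hs⟩ := hly.exists_factorization hp.1
  exact (hr.prodMap hp.1 hci hs).markovChain
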